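/- If q_i and q_j are linked quartet trees distinguishing adjacent interior edges of a binary tree T, and x is a leaf outside supp(q_i) ∪ supp(q_j), then x cannot replace two different taxa of supp(q_i) ∩ supp(q_j) in forming q_i(x) and q_j(x); equivalently, |supp(q_i(x)) ∪ supp(q_j(x))| ≠ 6. -/

import Mathlib

open SimpleGraph Finset

/-- An unrooted binary tree: a tree in which every vertex has degree 1 or 3. -/
def IsBinaryTree {V : Type} [Fintype V] [DecidableEq V]
    (G : SimpleGraph V) [DecidableRel G.Adj] : Prop :=
  G.IsTree ∧ ∀ v, G.degree v = 1 ∨ G.degree v = 3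

/-- A leaf is a vertex of degree one. -/
def IsLeaf {V : Type} [Fintype V] [DecidableEq V]
    (G : SimpleGraph V) [DecidableRel G.Adj] (v : V) : Prop := G.degree v = 1

/-- An interior edge is an edge both of whose endpoints have degree 3. -/
def InteriorEdge {V : Type} [Fintype V] [DecidableEq V]
    (G : SimpleGraph V) [DecidableRel G.Adj] (e : Sym2 V) : Prop :=
  e ∈ G.edgeSet ∧ ∀ v ∈ e, G.degree v = 3

/-- The edge `e` separates `a,b` from `c,d`: after deleting `e`, `a` and `b` lie in one
connected component and `c` and `d` lie in the other. -/
def Separates {V : Type} (G : SimpleGraph V) (e : Sym2 V) (a b c d : V) : Prop :=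
  e ∈ G.edgeSet ∧ (G.deleteEdges {e}).Reachable a b ∧
    (G.deleteEdges {e}).Reachable c d ∧ ¬ (G.deleteEdges {e}).Reachable a c

/-- The quartet tree `ab|cd` distinguishes `e` if `e` is the unique edge separating
`{a,b}` from `{c,d}`. -/
def Distinguishes {V : Type} (G : SimpleGraph V) (e : Sym2 V) (a b c d : V) : Prop :=
  Separates G e a b c d ∧ ∀ e', Separates G e' a b c d → e' = e

/-- `x` and `y` lie in the same class of the four-way partition induced by the interior
edge with endpoints `u`, `v`: they are connected after removing all edges incident
to `u` or `v`. -/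
def SameClass {V : Type} (G : SimpleGraph V) (u v x y : V) : Prop :=
  (G.deleteEdges (G.incidenceSet u ∪ G.incidenceSet v)).Reachable x y

/-- A quartet tree `ab|cd`, recorded as the ordered data of its two pairs `{a,b}`, `{c,d}`. -/
structure Q4 (V : Type) where
  a : V
  b : V
  c : V
  d : V

/-- The support of a quartet tree. -/
def Q4.supp {V : Type} [DecidableEq V] (q : Q4 V) : Finset V := {q.a, q.b, q.c, q.d}

/-- The quartet tree as an unordered pair of unordered pairs (its topology `ab|cd`). -/
def Q4.toSym {V : Type} (q : Q4 V) : Sym2 (Sym2 V) := s(s(q.a, q.b), s(q.c, q.d))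

open Classical in
/-- Quartet tree substitution: replace by `x` the element of the support of `q`
lying in the same class as `x` of the four-way partition induced by the edge `s(u,v)`. -/
noncomputable def subst {V : Type} (G : SimpleGraph V) (u v : V) (q : Q4 V) (x : V) : Q4 V :=
  if SameClass G u v x q.a then ⟨x, q.b, q.c, q.d⟩
  else if SameClass G u v x q.b then ⟨q.a, x, q.c, q.d⟩
  else if SameClass G u v x q.c then ⟨q.a, q.b, x, q.d⟩
  else ⟨q.a, q.b, q.c, x⟩

/-!
Let `w` be the common vertex, `s(u, w)` the edge of `qᵢ` and `s(v, w)` that of `qⱼ`. The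
partition induced by an interior edge has four classes, so two of the five leaves `{x} ∪ supp q`
share one; two taxa of `q` never do (the edge leading into their class would also separate `q`),
so `x` has a class-mate in each quartet. A union of size six forces these class-mates to be
distinct taxa `y ≠ y'` of `supp qᵢ ∩ supp qⱼ`; both are joined to `x` avoiding `w`, so they lie in
one branch at `w`, and both quartets read `yy'|z·` with `z` the third common taxon. If that branch is the one through `u`, then `s(u, w)` separates `qⱼ` as well;
symmetrically for `v`; otherwise `z` would have to lie in the branches through both `u` and `v`.
-/

namespace SimpleGraph

variable {V : Type} {G : SimpleGraph V} {c u w x y z : V}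

lemma deleteEdges_incidenceSet_le {e : Sym2 V} (hw : w ∈ e) :
    G.deleteEdges (G.incidenceSet w) ≤ G.deleteEdges {e} := by
  intro a b hab
  simp only [deleteEdges_adj, Set.mem_singleton_iff] at hab ⊢
  exact ⟨hab.1, fun h => hab.2 ⟨G.mem_edgeSet.mpr hab.1, h ▸ hw⟩⟩

lemma Walk.exists_reachable_deleteEdges_incidenceSet_union (p : G.Walk x u)
    (hxu : x ≠ u) (hxw : x ≠ w) :
    ∃ c, (G.Adj u c ∨ G.Adj w c) ∧ c ≠ u ∧ c ≠ w ∧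
      (G.deleteEdges (G.incidenceSet u ∪ G.incidenceSet w)).Reachable x c := by
  induction p with
  | nil => exact absurd rfl hxu
  | @cons x y u hxy _ ih =>
    by_cases hy : y = u ∨ y = w
    · rcases hy with rfl | rfl
      exacts [⟨x, .inl hxy.symm, hxu, hxw, .rfl⟩, ⟨x, .inr hxy.symm, hxu, hxw, .rfl⟩]
    push Not at hy
    obtain ⟨c, hc, hcu, hcw, hyc⟩ := ih hy.1 hy.2
    refine ⟨c, hc, hcu, hcw, Adj.reachable ?_ |>.trans hyc⟩
    simp only [deleteEdges_adj, Set.mem_union, mk'_mem_incidenceSet_iff]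
    tauto

lemma exists_adj_reachable_deleteEdges_incidenceSet (hG : G.Connected) (hxw : x ≠ w) :
    ∃ c, G.Adj w c ∧ (G.deleteEdges (G.incidenceSet w)).Reachable x c := by
  obtain ⟨c, hc, -, -, hxc⟩ :=
    (hG.preconnected x w).some.exists_reachable_deleteEdges_incidenceSet_union hxw hxw
  exact ⟨c, hc.elim id id, by simpa using hxc⟩

lemma reachable_deleteEdges_of_adj_of_ne (hcw : G.Adj c w) (hcu : c ≠ u)
    (h : (G.deleteEdges (G.incidenceSet w)).Reachable y c) :
    (G.deleteEdges {s(u, w)}).Reachable y w := by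
  refine (h.mono (deleteEdges_incidenceSet_le (Sym2.mem_mk_right u w))).trans (Adj.reachable ?_)
  simp only [deleteEdges_adj, Set.mem_singleton_iff, Sym2.congr_left]
  exact ⟨hcw, hcu⟩

lemma reachable_deleteEdges_incidenceSet_of_not_reachable (hG : G.Connected)
    (hz : ¬ (G.deleteEdges {s(u, w)}).Reachable z w) :
    (G.deleteEdges (G.incidenceSet w)).Reachable z u := by
  have hzw : z ≠ w := by rintro rfl; exact hz .rfl
  obtain ⟨c, hwc, hzc⟩ := exists_adj_reachable_deleteEdges_incidenceSet hG hzw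
  obtain rfl : c = u := by
    by_contra hcu
    exact hz (reachable_deleteEdges_of_adj_of_ne hwc.symm hcu hzc)
  exact hzc

lemma IsAcyclic.not_reachable_deleteEdges (hG : G.IsAcyclic) (huw : G.Adj u w) :
    ¬ (G.deleteEdges {s(u, w)}).Reachable u w :=
  isBridge_iff.mp (isAcyclic_iff_forall_adj_isBridge.mp hG huw)

end SimpleGraph

section Quartet

variable {V : Type} {G : SimpleGraph V} {e : Sym2 V} {a b c d n t u v w y y' z z' : V}

lemma Separates.swap_left (h : Separates G e a b c d) : Separates G e b a c d :=
  ⟨h.1, h.2.1.symm, h.2.2.1, fun hbc => h.2.2.2 (h.2.1.trans hbc)⟩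

lemma Separates.swap_right (h : Separates G e a b c d) : Separates G e a b d c :=
  ⟨h.1, h.2.1, h.2.2.1.symm, fun had => h.2.2.2 (had.trans h.2.2.1.symm)⟩

lemma Separates.symm (h : Separates G e a b c d) : Separates G e c d a b :=
  ⟨h.1, h.2.2.1, h.2.1, fun hca => h.2.2.2 hca.symm⟩

lemma Distinguishes.swap_left (h : Distinguishes G e a b c d) : Distinguishes G e b a c d :=
  ⟨h.1.swap_left, fun _ he => h.2 _ he.swap_left⟩

lemma Distinguishes.swap_right (h : Distinguishes G e a b c d) : Distinguishes G e a b d c :=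
  ⟨h.1.swap_right, fun _ he => h.2 _ he.swap_right⟩

lemma Distinguishes.symm (h : Distinguishes G e a b c d) : Distinguishes G e c d a b :=
  ⟨h.1.symm, fun _ he => h.2 _ he.symm⟩

lemma Distinguishes.exists_of_reachable [DecidableEq V] (hd : Distinguishes G e a b c d)
    (hy : y ∈ ({a, b, c, d} : Finset V)) (hy' : y' ∈ ({a, b, c, d} : Finset V)) (hyy' : y ≠ y')
    (hr : (G.deleteEdges {e}).Reachable y y') :
    ∃ z t, Distinguishes G e y y' z t ∧ ({a, b, c, d} : Finset V) = {y, y', z, t} := by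
  have hac := hd.1.2.2.2
  have had := hd.1.swap_right.2.2.2
  have hbc := hd.1.swap_left.2.2.2
  have hbd := hd.1.swap_left.swap_right.2.2.2
  simp only [Finset.mem_insert, Finset.mem_singleton] at hy hy'
  rcases hy with rfl | rfl | rfl | rfl <;> rcases hy' with rfl | rfl | rfl | rfl <;>
    first
    | exact absurd rfl hyy'
    | exact absurd hr ‹_›
    | exact absurd hr.symm ‹_›
    | exact ⟨_, _, hd, rfl⟩
    | exact ⟨_, _, hd.swap_left, Finset.insert_comm _ _ _⟩
    | exact ⟨_, _, hd.symm, by grind⟩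
    | exact ⟨_, _, hd.symm.swap_left, by grind⟩

lemma Distinguishes.exists_of_reachable_of_mem [DecidableEq V] (hd : Distinguishes G e a b c d)
    (hy : y ∈ ({a, b, c, d} : Finset V)) (hy' : y' ∈ ({a, b, c, d} : Finset V))
    (hz : z ∈ ({a, b, c, d} : Finset V)) (hyy' : y ≠ y') (hzy : z ≠ y) (hzy' : z ≠ y')
    (hr : (G.deleteEdges {e}).Reachable y y') :
    ∃ t, Distinguishes G e y y' z t := by
  obtain ⟨z', t, hd', heq⟩ := hd.exists_of_reachable hy hy' hyy' hr
  rw [heq] at hz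
  simp only [Finset.mem_insert, Finset.mem_singleton] at hz
  rcases hz with rfl | rfl | rfl | rfl
  exacts [absurd rfl hzy, absurd rfl hzy', ⟨t, hd'⟩, ⟨z', hd'.swap_right⟩]

lemma Distinguishes.branch_eq (hG : G.IsTree) (huw : G.Adj u w) (hnw : G.Adj n w)
    (han : (G.deleteEdges (G.incidenceSet w)).Reachable a n)
    (hab : (G.deleteEdges (G.incidenceSet w)).Reachable a b)
    (hd : Distinguishes G s(u, w) a b c d) : n = u := by
  by_contra hnu
  have hle := deleteEdges_incidenceSet_le (G := G) (Sym2.mem_mk_right n w)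
  have haw := reachable_deleteEdges_of_adj_of_ne hnw hnu han
  have hcu := reachable_deleteEdges_incidenceSet_of_not_reachable hG.connected
    fun h => hd.1.2.2.2 (haw.trans h.symm)
  have hdu := reachable_deleteEdges_incidenceSet_of_not_reachable hG.connected
    fun h => hd.1.swap_right.2.2.2 (haw.trans h.symm)
  have hcw := reachable_deleteEdges_of_adj_of_ne huw (Ne.symm hnu) hcu
  have hsep : Separates G s(n, w) a b c d :=
    ⟨hnw, hab.mono hle, (hcu.trans hdu.symm).mono hle, fun hac =>
      hG.isAcyclic.not_reachable_deleteEdges hnw ((han.mono hle).symm.trans (hac.trans hcw))⟩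
  exact hnu (Sym2.congr_left.mp (hd.2 _ hsep))

lemma Distinguishes.not_sameClass (hG : G.IsTree) (huw : G.Adj u w) (hau : a ≠ u) (haw : a ≠ w)
    (hd : Distinguishes G s(u, w) a b c d) : ¬ SameClass G u w a b := by
  intro hab
  obtain ⟨n, hwn, han⟩ := exists_adj_reachable_deleteEdges_incidenceSet hG.connected haw
  obtain rfl := hd.branch_eq hG huw hwn.symm han
    (hab.mono (deleteEdges_anti Set.subset_union_right))
  obtain ⟨n', hun', han'⟩ := exists_adj_reachable_deleteEdges_incidenceSet hG.connected hau
  obtain rfl := (Sym2.eq_swap ▸ hd : Distinguishes G s(w, n) a b c d).branch_eq hG huw.symm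
    hun'.symm han' (hab.mono (deleteEdges_anti Set.subset_union_left))
  exact hG.isAcyclic.not_reachable_deleteEdges huw
    ((han.mono (deleteEdges_incidenceSet_le (Sym2.mem_mk_right _ _))).symm.trans
      (han'.mono (deleteEdges_incidenceSet_le (Sym2.mem_mk_left _ _))))

lemma Distinguishes.eq_of_reachable_of_adj (hG : G.Connected) (huw : G.Adj u w)
    (hyu : (G.deleteEdges (G.incidenceSet w)).Reachable y u)
    (hyy' : (G.deleteEdges (G.incidenceSet w)).Reachable y y')
    (hyz : ¬ (G.deleteEdges {s(u, w)}).Reachable y z)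
    (hd : Distinguishes G s(v, w) y y' z z') : u = v := by
  by_contra huv
  have hle := deleteEdges_incidenceSet_le (G := G) (Sym2.mem_mk_right u w)
  have hyw := reachable_deleteEdges_of_adj_of_ne huw huv hyu
  have hzv := reachable_deleteEdges_incidenceSet_of_not_reachable hG
    fun h => hd.1.2.2.2 (hyw.trans h.symm)
  have hz'v := reachable_deleteEdges_incidenceSet_of_not_reachable hG
    fun h => hd.1.swap_right.2.2.2 (hyw.trans h.symm)
  have hsep : Separates G s(u, w) y y' z z' :=
    ⟨huw, hyy'.mono hle, (hzv.trans hz'v.symm).mono hle, hyz⟩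
  exact huv (Sym2.congr_left.mp (hd.2 _ hsep))

lemma Distinguishes.not_reachable_of_adj (hG : G.Connected) (huw : G.Adj u w)
    (hvw : G.Adj v w) (huv : u ≠ v) (hyw : y ≠ w)
    (hdu : Distinguishes G s(u, w) y y' z t) (hdv : Distinguishes G s(v, w) y y' z z') :
    ¬ (G.deleteEdges (G.incidenceSet w)).Reachable y y' := by
  intro hyy'
  obtain ⟨c, hwc, hyc⟩ := exists_adj_reachable_deleteEdges_incidenceSet hG hyw
  by_cases hcu : c = u
  · exact huv (hdv.eq_of_reachable_of_adj hG huw (hcu ▸ hyc) hyy' hdu.1.2.2.2)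
  by_cases hcv : c = v
  · exact huv (hdu.eq_of_reachable_of_adj hG hvw (hcv ▸ hyc) hyy' hdv.1.2.2.2).symm
  have hzu := reachable_deleteEdges_incidenceSet_of_not_reachable hG fun h =>
    hdu.1.2.2.2 ((reachable_deleteEdges_of_adj_of_ne hwc.symm hcu hyc).trans h.symm)
  exact hdv.1.2.2.2 ((reachable_deleteEdges_of_adj_of_ne hwc.symm hcv hyc).trans
    (reachable_deleteEdges_of_adj_of_ne huw huv hzu).symm)

end Quartet

lemma subst_congr {V : Type} {G : SimpleGraph V} {u v u' v' : V} (h : s(u, v) = s(u', v'))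
    (q : Q4 V) (x : V) :
    subst G u v q x = subst G u' v' q x := by
  rcases Sym2.eq_iff.mp h with ⟨rfl, rfl⟩ | ⟨rfl, rfl⟩
  · rfl
  · unfold subst SameClass
    rw [Set.union_comm]

section Subst

variable {V : Type} [DecidableEq V] {G : SimpleGraph V} {u v x : V} {q : Q4 V}

lemma Q4.pairwise_ne_of_card_supp (hq : q.supp.card = 4) :
    q.a ≠ q.b ∧ q.a ≠ q.c ∧ q.a ≠ q.d ∧ q.b ≠ q.c ∧ q.b ≠ q.d ∧ q.c ≠ q.d := by
  unfold Q4.supp at hq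
  refine ⟨?_, ?_, ?_, ?_, ?_, ?_⟩ <;> intro h <;> rw [h] at hq <;>
    simp only [mem_insert, mem_singleton, true_or, or_true, insert_eq_of_mem] at hq <;>
    grind [Finset.card_le_three]

lemma subst_supp (hq : q.supp.card = 4) (hx : ∃ y ∈ q.supp, SameClass G u v x y) :
    ∃ y ∈ q.supp, SameClass G u v x y ∧ (subst G u v q x).supp = insert x (q.supp.erase y) := by
  have := Q4.pairwise_ne_of_card_supp hq
  unfold subst
  split_ifs with ha hb hc
  · exact ⟨q.a, by simp [Q4.supp], ha, by grind [Q4.supp]⟩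
  · exact ⟨q.b, by simp [Q4.supp], hb, by grind [Q4.supp]⟩
  · exact ⟨q.c, by simp [Q4.supp], hc, by grind [Q4.supp]⟩
  · obtain ⟨y, hy, hxy⟩ := hx
    refine ⟨q.d, by simp [Q4.supp], ?_, by grind [Q4.supp]⟩
    simp only [Q4.supp, mem_insert, mem_singleton] at hy
    rcases hy with rfl | rfl | rfl | rfl <;> first | contradiction | exact hxy

end Subst

theorem Finset.mem_erase_of_card_union_lt_card_insert_erase {α : Type*} [DecidableEq α]
    {s t : Finset α} {x y y' : α} (hy : y ∈ s) (hy' : y' ∈ t)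
    (h : #(s ∪ t) < #(insert x (s.erase y) ∪ insert x (t.erase y'))) :
    y ∈ t.erase y' ∧ y' ∈ s.erase y := by
  rw [← insert_union_distrib] at h
  have heq : s.erase y ∪ t.erase y' = s ∪ t :=
    eq_of_subset_of_card_le (union_subset_union (erase_subset _ _) (erase_subset _ _))
      (by have := card_insert_le x (s.erase y ∪ t.erase y'); omega)
  have hy₁ : y ∈ s.erase y ∪ t.erase y' := heq ▸ mem_union_left _ hy
  have hy₂ : y' ∈ s.erase y ∪ t.erase y' := heq ▸ mem_union_right _ hy'
  simp only [mem_union, mem_erase, ne_eq, not_true_eq_false, false_and, false_or,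
    or_false] at hy₁ hy₂
  exact ⟨mem_erase.mpr hy₁, mem_erase.mpr hy₂⟩

section Main

variable {V : Type} [Fintype V] [DecidableEq V] {G : SimpleGraph V} [DecidableRel G.Adj]
  {u v w x : V} {q qi qj : Q4 V}

lemma InteriorEdge.notMem_of_degree_eq_one {e : Sym2 V} {t : V} (he : InteriorEdge G e)
    (ht : G.degree t = 1) : t ∉ e := fun h => by
  have := he.2 t h
  omega

lemma InteriorEdge.card_neighborFinset_union_sdiff_le (he : InteriorEdge G s(u, w)) :
    #((G.neighborFinset u ∪ G.neighborFinset w) \ {u, w}) ≤ 4 := by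
  have huw : G.Adj u w := he.1
  rw [card_sdiff_of_subset (by simp [insert_subset_iff, huw, huw.symm]), card_pair huw.ne]
  have := card_union_le (G.neighborFinset u) (G.neighborFinset w)
  simp only [card_neighborFinset_eq_degree, he.2 u (Sym2.mem_mk_left u w),
    he.2 w (Sym2.mem_mk_right u w)] at this
  omega

lemma Distinguishes.exists_sameClass (hG : G.IsTree) (he : InteriorEdge G s(u, w))
    (hd : Distinguishes G s(u, w) q.a q.b q.c q.d) (hq : q.supp.card = 4)
    (hleaf : ∀ t ∈ insert x q.supp, G.degree t = 1) (hx : x ∉ q.supp) :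
    ∃ y ∈ q.supp, SameClass G u w x y := by
  have huw : G.Adj u w := he.1
  have hne : ∀ t ∈ insert x q.supp, t ≠ u ∧ t ≠ w := fun t ht =>
    ⟨by rintro rfl; exact he.notMem_of_degree_eq_one (hleaf t ht) (Sym2.mem_mk_left t w),
      by rintro rfl; exact he.notMem_of_degree_eq_one (hleaf t ht) (Sym2.mem_mk_right u t)⟩
  have hmap : ∀ t ∈ insert x q.supp,
      ∃ c ∈ (G.neighborFinset u ∪ G.neighborFinset w) \ {u, w}, SameClass G u w t c := by
    intro t ht
    obtain ⟨c, hc, hcu, hcw, htc⟩ := (hG.connected.preconnected t u).some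
      |>.exists_reachable_deleteEdges_incidenceSet_union (hne t ht).1 (hne t ht).2
    exact ⟨c, by simp [hc, hcu, hcw], htc⟩
  choose! f hfT hf using hmap
  obtain ⟨t₁, ht₁, t₂, ht₂, hne₁₂, hf₁₂⟩ := exists_ne_map_eq_of_card_lt_of_maps_to
    (by rw [card_insert_of_notMem hx, hq]; have := he.card_neighborFinset_union_sdiff_le; omega)
    hfT
  have h₁₂ : SameClass G u w t₁ t₂ := Reachable.trans (hf t₁ ht₁) (hf₁₂ ▸ (hf t₂ ht₂).symm)
  rcases mem_insert.mp ht₁ with rfl | hq₁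
  · rcases mem_insert.mp ht₂ with rfl | hq₂
    exacts [absurd rfl hne₁₂, ⟨t₂, hq₂, h₁₂⟩]
  rcases mem_insert.mp ht₂ with rfl | hq₂
  · exact ⟨t₁, hq₁, Reachable.symm h₁₂⟩
  obtain ⟨z, t, hd', -⟩ := hd.exists_of_reachable hq₁ hq₂ hne₁₂
    (Reachable.mono (deleteEdges_anti Set.subset_union_left) h₁₂ |>.mono
      (deleteEdges_incidenceSet_le (Sym2.mem_mk_left u w)))
  exact absurd h₁₂ (hd'.not_sameClass hG huw (hne t₁ ht₁).1 (hne t₁ ht₁).2)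

theorem card_supp_subst_union_ne_six (hG : G.IsTree)
    (hei : InteriorEdge G s(u, w)) (hej : InteriorEdge G s(v, w)) (huv : u ≠ v)
    (hdi : Distinguishes G s(u, w) qi.a qi.b qi.c qi.d)
    (hdj : Distinguishes G s(v, w) qj.a qj.b qj.c qj.d)
    (hci : qi.supp.card = 4) (hcj : qj.supp.card = 4)
    (hsub : ∀ t ∈ qi.supp ∪ qj.supp, G.degree t = 1)
    (hlink : (qi.supp ∪ qj.supp).card = 5)
    (hlx : G.degree x = 1) (hxs : x ∉ qi.supp ∪ qj.supp) :
    ((subst G u w qi x).supp ∪ (subst G v w qj x).supp).card ≠ 6 := by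
  intro h6
  obtain ⟨hxi, hxj⟩ : x ∉ qi.supp ∧ x ∉ qj.supp := by simpa [not_or] using hxs
  obtain ⟨yi, hyi, hxyi, hsi⟩ := subst_supp hci <| hdi.exists_sameClass hG hei hci
    (forall_mem_insert _ _ _ |>.mpr ⟨hlx, fun t ht => hsub t (mem_union_left _ ht)⟩) hxi
  obtain ⟨yj, hyj, hxyj, hsj⟩ := subst_supp hcj <| hdj.exists_sameClass hG hej hcj
    (forall_mem_insert _ _ _ |>.mpr ⟨hlx, fun t ht => hsub t (mem_union_right _ ht)⟩) hxj
  rw [hsi, hsj] at h6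
  obtain ⟨hyi', hyj'⟩ := mem_erase_of_card_union_lt_card_insert_erase (x := x) hyi hyj (by omega)
  obtain ⟨hyij, hyiB⟩ := mem_erase.mp hyi'
  obtain ⟨z, hz, hzy⟩ := exists_mem_notMem_of_card_lt_card (s := {yi, yj})
    (t := qi.supp ∩ qj.supp) <| card_le_two.trans_lt <| by
      have := card_union_add_card_inter qi.supp qj.supp
      omega
  simp only [mem_insert, mem_singleton, not_or] at hzy
  have hw : (G.deleteEdges (G.incidenceSet w)).Reachable yi yj :=
    (Reachable.mono (deleteEdges_anti Set.subset_union_right) hxyi).symm.trans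
      (Reachable.mono (deleteEdges_anti Set.subset_union_right) hxyj)
  obtain ⟨t, hdi'⟩ := hdi.exists_of_reachable_of_mem hyi (mem_erase.mp hyj').2 (mem_inter.mp hz).1
    hyij hzy.1 hzy.2 (hw.mono (deleteEdges_incidenceSet_le (Sym2.mem_mk_right u w)))
  obtain ⟨t', hdj'⟩ := hdj.exists_of_reachable_of_mem hyiB hyj (mem_inter.mp hz).2
    hyij hzy.1 hzy.2 (hw.mono (deleteEdges_incidenceSet_le (Sym2.mem_mk_right v w)))
  refine hdi'.not_reachable_of_adj hG.connected hei.1 hej.1 huv ?_ hdj' hw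
  rintro rfl
  exact hei.notMem_of_degree_eq_one (hsub yi (mem_union_left _ hyi)) (Sym2.mem_mk_right u yi)

end Main

/-- If `qᵢ`, `qⱼ` are linked quartet trees and `x` is a leaf outside their combined support,
then `x` cannot replace two different taxa of `supp(qᵢ) ∩ supp(qⱼ)`; equivalently,
`|supp(qᵢ(x)) ∪ supp(qⱼ(x))| ≠ 6`. -/
theorem stmt_10 {V : Type} [Fintype V] [DecidableEq V] (G : SimpleGraph V) [DecidableRel G.Adj]
    (hG : IsBinaryTree G) (u₁ v₁ u₂ v₂ : V) (qi qj : Q4 V)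
    (hei : InteriorEdge G s(u₁, v₁)) (hej : InteriorEdge G s(u₂, v₂))
    (hne : s(u₁, v₁) ≠ s(u₂, v₂)) (hadj : ∃ w, w ∈ s(u₁, v₁) ∧ w ∈ s(u₂, v₂))
    (hdi : Distinguishes G s(u₁, v₁) qi.a qi.b qi.c qi.d)
    (hdj : Distinguishes G s(u₂, v₂) qj.a qj.b qj.c qj.d)
    (hci : qi.supp.card = 4) (hcj : qj.supp.card = 4)
    (hsub : ∀ t ∈ qi.supp ∪ qj.supp, G.degree t = 1)
    (hlink : (qi.supp ∪ qj.supp).card = 5)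
    (x : V) (hlx : G.degree x = 1) (hxs : x ∉ qi.supp ∪ qj.supp) :
    ((subst G u₁ v₁ qi x).supp ∪ (subst G u₂ v₂ qj x).supp).card ≠ 6 := by
  obtain ⟨w, hw₁, hw₂⟩ := hadj
  obtain ⟨u, hu⟩ : ∃ u, s(u₁, v₁) = s(u, w) := ⟨_, (Sym2.other_spec hw₁).symm.trans Sym2.eq_swap⟩
  obtain ⟨v, hv⟩ : ∃ v, s(u₂, v₂) = s(v, w) := ⟨_, (Sym2.other_spec hw₂).symm.trans Sym2.eq_swap⟩
  rw [subst_congr hu, subst_congr hv]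
  rw [hu, hv] at hne
  rw [hu] at hei hdi
  rw [hv] at hej hdj
  exact card_supp_subst_union_ne_six hG.1 hei hej (fun h => hne (h ▸ rfl)) hdi hdj hci hcj hsub
    hlink hlx hxs
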